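/- arXiv:1406.4232 — 3 statements merged into one kernel-verified Lean document; each statement's English description precedes it below -/
import Mathlib

section
/- Let G be a group with finite generating set S and H an infinite index subgroup of G. Then for each element h ∈ H there exists an H-perpendicular geodesic ray in the Cayley graph Γ(G,S) with initial point h, i.e. a geodesic ray γ with γ(0) = h and d_S(γ(r), H) = r for all r > 0. -/
/-- The word length of `g` with respect to the (symmetrized) alphabet `S`. -/
noncomputable def wordLength {G : Type*} [Group G] (S : Set G) (g : G) : ℕ :=
  sInf {n | ∃ w : List G, (∀ x ∈ w, x ∈ S ∨ x⁻¹ ∈ S) ∧ w.prod = g ∧ w.length = n}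

/-- The word metric on `G` associated to the generating set `S`. -/
noncomputable def wordDist {G : Type*} [Group G] (S : Set G) (x y : G) : ℕ :=
  wordLength S (x⁻¹ * y)


/-- The distance from a point to a subgroup in the word metric. -/
noncomputable def distToSubgroup {G : Type*} [Group G] (S : Set G) (H : Subgroup G) (x : G) : ℕ :=
  sInf {n | ∃ h ∈ H, n = wordDist S x h}

/-!
Since `H` has infinite index and balls in `Γ(G,S)` are finite, points arbitrarily far from `H`
exist. A geodesic from a nearest point `p ∈ H` to such a point `x`, translated to start at `1`,
is a long `H`-perpendicular segment: its `i`-th vertex is at distance at most `i` from `1 ∈ H`,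
and at least `i` from `H` because it is `d(x, H) - i` away from `p⁻¹ x`.
As the Cayley graph is locally finite, Kőnig's lemma turns these segments into a ray, which is
geodesic because `d(·, H)` is `1`-Lipschitz; translating it by `h ∈ H` gives the theorem.
-/

open Filter
open scoped Pointwise

theorem exists_seq_of_exists_succ {α : Type*} {P : ℕ → α → Prop} {R : α → α → Prop} {a : α}
    (h0 : P 0 a) (hsucc : ∀ n x, P n x → ∃ y, R x y ∧ P (n + 1) y) :
    ∃ f : ℕ → α, f 0 = a ∧ ∀ n, P n (f n) ∧ R (f n) (f (n + 1)) := by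
  choose! next hR hP using hsucc
  let f : ℕ → α := fun n => Nat.rec a next n
  have hf : ∀ n, P n (f n) := by
    intro n
    induction n with
    | zero => exact h0
    | succ n ih => exact hP n _ ih
  exact ⟨f, rfl, fun n => ⟨hf n, hR n _ (hf n)⟩⟩

section WordMetric

variable {G : Type*} [Group G] {S : Set G}

-- `x ∈ S ∪ S⁻¹` unfolds to the alphabet condition `x ∈ S ∨ x⁻¹ ∈ S` of `wordLength`.
theorem wordLength_prod_le_length {w : List G} (hw : ∀ x ∈ w, x ∈ S ∪ S⁻¹) :
    wordLength S w.prod ≤ w.length :=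
  Nat.sInf_le ⟨w, hw, rfl, rfl⟩

theorem wordLength_one : wordLength S (1 : G) = 0 :=
  Nat.le_zero.mp (wordLength_prod_le_length (w := []) (by simp))

theorem exists_word_length_eq_wordLength (hSgen : Subgroup.closure S = ⊤) (g : G) :
    ∃ w : List G, (∀ x ∈ w, x ∈ S ∪ S⁻¹) ∧ w.prod = g ∧ w.length = wordLength S g := by
  have hg : g ∈ Submonoid.closure (S ∪ S⁻¹) := by
    rw [← Subgroup.closure_toSubmonoid, hSgen]
    trivial
  obtain ⟨w, hw, rfl⟩ := Submonoid.exists_list_of_mem_closure hg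
  exact Nat.sInf_mem (⟨w.length, w, hw, rfl, rfl⟩ :
    {n | ∃ v : List G, (∀ x ∈ v, x ∈ S ∪ S⁻¹) ∧ v.prod = w.prod ∧ v.length = n}.Nonempty)

theorem wordLength_inv_le (hSgen : Subgroup.closure S = ⊤) (g : G) :
    wordLength S g⁻¹ ≤ wordLength S g := by
  obtain ⟨w, hw, rfl, hlen⟩ := exists_word_length_eq_wordLength hSgen g
  have hw' : ∀ x ∈ (w.map (·⁻¹)).reverse, x ∈ S ∪ S⁻¹ := by
    simp only [List.mem_reverse, List.mem_map]
    rintro _ ⟨y, hy, rfl⟩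
    simpa [or_comm] using hw y hy
  simpa [← List.prod_inv_reverse, hlen] using wordLength_prod_le_length hw'

theorem wordLength_inv (hSgen : Subgroup.closure S = ⊤) (g : G) :
    wordLength S g⁻¹ = wordLength S g :=
  (wordLength_inv_le hSgen g).antisymm (by simpa using wordLength_inv_le hSgen g⁻¹)

theorem wordLength_mul_le (hSgen : Subgroup.closure S = ⊤) (a b : G) :
    wordLength S (a * b) ≤ wordLength S a + wordLength S b := by
  obtain ⟨v, hv, rfl, hvlen⟩ := exists_word_length_eq_wordLength hSgen a
  obtain ⟨w, hw, rfl, hwlen⟩ := exists_word_length_eq_wordLength hSgen b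
  have hvw : ∀ x ∈ v ++ w, x ∈ S ∪ S⁻¹ := fun x hx => (List.mem_append.mp hx).elim (hv x) (hw x)
  simpa [hvlen, hwlen] using wordLength_prod_le_length hvw

theorem finite_setOf_wordLength_le (hSfin : S.Finite) (hSgen : Subgroup.closure S = ⊤) (n : ℕ) :
    {g : G | wordLength S g ≤ n}.Finite := by
  have : Finite ↥(S ∪ S⁻¹) := (hSfin.union hSfin.inv).to_subtype
  refine ((List.finite_length_le _ n).image fun l : List ↥(S ∪ S⁻¹) => (l.map (↑)).prod).subset ?_
  intro g hg
  obtain ⟨w, hw, rfl, hlen⟩ := exists_word_length_eq_wordLength hSgen g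
  lift w to List ↥(S ∪ S⁻¹) using hw
  refine ⟨w, ?_, rfl⟩
  rw [List.length_map] at hlen
  exact hlen.trans_le hg

theorem wordDist_comm (hSgen : Subgroup.closure S = ⊤) (x y : G) :
    wordDist S x y = wordDist S y x := by
  rw [wordDist, ← wordLength_inv hSgen, mul_inv_rev, inv_inv, wordDist]

theorem wordDist_triangle (hSgen : Subgroup.closure S = ⊤) (x y z : G) :
    wordDist S x z ≤ wordDist S x y + wordDist S y z := by
  simpa [wordDist, mul_assoc] using wordLength_mul_le hSgen (x⁻¹ * y) (y⁻¹ * z)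

theorem wordDist_mul_left (g x y : G) : wordDist S (g * x) (g * y) = wordDist S x y := by
  simp [wordDist, mul_assoc]

theorem finite_setOf_wordDist_le (hSfin : S.Finite) (hSgen : Subgroup.closure S = ⊤)
    (g : G) (n : ℕ) : {y : G | wordDist S g y ≤ n}.Finite :=
  ((finite_setOf_wordLength_le hSfin hSgen n).image (g * ·)).subset fun y hy =>
    ⟨g⁻¹ * y, hy, mul_inv_cancel_left g y⟩

theorem wordDist_prod_take_le {w : List G} (hw : ∀ x ∈ w, x ∈ S ∪ S⁻¹) {i j : ℕ} (hij : i ≤ j) :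
    wordDist S (w.take i).prod (w.take j).prod ≤ j - i := by
  obtain ⟨k, rfl⟩ := Nat.exists_eq_add_of_le hij
  have hletters : ∀ x ∈ (w.drop i).take k, x ∈ S ∪ S⁻¹ :=
    fun x hx => hw x (List.mem_of_mem_drop (List.mem_of_mem_take hx))
  calc wordDist S (w.take i).prod (w.take (i + k)).prod
      = wordLength S ((w.drop i).take k).prod := by simp [wordDist, List.take_add]
    _ ≤ ((w.drop i).take k).length := wordLength_prod_le_length hletters
    _ ≤ i + k - i := by simp

theorem wordDist_le_of_wordDist_succ_le (hSgen : Subgroup.closure S = ⊤) {γ : ℕ → G}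
    (hstep : ∀ n, wordDist S (γ n) (γ (n + 1)) ≤ 1) (m k : ℕ) :
    wordDist S (γ m) (γ (m + k)) ≤ k := by
  induction k with
  | zero => simp [wordDist, wordLength_one]
  | succ k ih =>
    calc wordDist S (γ m) (γ (m + (k + 1)))
        ≤ wordDist S (γ m) (γ (m + k)) + wordDist S (γ (m + k)) (γ (m + k + 1)) :=
          wordDist_triangle hSgen _ _ _
      _ ≤ k + 1 := add_le_add ih (hstep _)

end WordMetric

section DistToSubgroup

variable {G : Type*} [Group G] {S : Set G} {H : Subgroup G}

variable (S H) in
theorem exists_mem_wordDist_eq_distToSubgroup (x : G) :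
    ∃ k ∈ H, wordDist S x k = distToSubgroup S H x := by
  obtain ⟨k, hk, hx⟩ :=
    Nat.sInf_mem (⟨_, 1, H.one_mem, rfl⟩ : {n | ∃ k ∈ H, n = wordDist S x k}.Nonempty)
  exact ⟨k, hk, hx.symm⟩

theorem distToSubgroup_le_wordDist {k : G} (hk : k ∈ H) (x : G) :
    distToSubgroup S H x ≤ wordDist S x k :=
  Nat.sInf_le ⟨k, hk, rfl⟩

theorem distToSubgroup_le_wordDist_add (hSgen : Subgroup.closure S = ⊤) (x y : G) :
    distToSubgroup S H x ≤ wordDist S x y + distToSubgroup S H y := by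
  obtain ⟨k, hk, hyk⟩ := exists_mem_wordDist_eq_distToSubgroup S H y
  calc distToSubgroup S H x ≤ wordDist S x k := distToSubgroup_le_wordDist hk x
    _ ≤ wordDist S x y + wordDist S y k := wordDist_triangle hSgen x y k
    _ = wordDist S x y + distToSubgroup S H y := by rw [hyk]

theorem distToSubgroup_mul_left {k : G} (hk : k ∈ H) (x : G) :
    distToSubgroup S H (k * x) = distToSubgroup S H x := by
  have key : ∀ k ∈ H, ∀ x, distToSubgroup S H (k * x) ≤ distToSubgroup S H x := by
    intro k hk x
    obtain ⟨l, hl, hxl⟩ := exists_mem_wordDist_eq_distToSubgroup S H x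
    calc distToSubgroup S H (k * x) ≤ wordDist S (k * x) (k * l) :=
          distToSubgroup_le_wordDist (H.mul_mem hk hl) _
      _ = distToSubgroup S H x := by rw [wordDist_mul_left, hxl]
  exact (key k hk x).antisymm (by simpa using key k⁻¹ (H.inv_mem hk) (k * x))

theorem exists_le_distToSubgroup (hSfin : S.Finite) (hSgen : Subgroup.closure S = ⊤)
    (hind : H.index = 0) (N : ℕ) : ∃ x : G, N ≤ distToSubgroup S H x := by
  by_contra! hlt
  have hcover : Set.univ ⊆ (QuotientGroup.mk : G → G ⧸ H) '' {g | wordLength S g ≤ N} := by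
    rintro q -
    obtain ⟨y, rfl⟩ := QuotientGroup.mk_surjective q
    obtain ⟨k, hk, hyk⟩ := exists_mem_wordDist_eq_distToSubgroup S H y⁻¹
    refine ⟨y * k, ?_, QuotientGroup.eq.mpr (by simpa using H.inv_mem hk)⟩
    simp only [wordDist, inv_inv] at hyk
    exact (hyk.trans_lt (hlt y⁻¹)).le
  have : Finite (G ⧸ H) :=
    Set.finite_univ_iff.mp (((finite_setOf_wordLength_le hSfin hSgen N).image _).subset hcover)
  exact Subgroup.index_ne_zero_of_finite hind

theorem wordDist_eq_natAbs_of_distToSubgroup_eq (hSgen : Subgroup.closure S = ⊤) {γ : ℕ → G}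
    (hstep : ∀ n, wordDist S (γ n) (γ (n + 1)) ≤ 1)
    (hdist : ∀ n, distToSubgroup S H (γ n) = n) (m n : ℕ) :
    wordDist S (γ m) (γ n) = ((m : ℤ) - (n : ℤ)).natAbs := by
  wlog hmn : m ≤ n generalizing m n
  · rw [wordDist_comm hSgen, this n m (le_of_not_ge hmn)]
    omega
  obtain ⟨k, rfl⟩ := Nat.exists_eq_add_of_le hmn
  have hupper := wordDist_le_of_wordDist_succ_le hSgen hstep m k
  have hlower := distToSubgroup_le_wordDist_add (H := H) hSgen (γ (m + k)) (γ m)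
  rw [hdist, hdist, wordDist_comm hSgen] at hlower
  omega

end DistToSubgroup

section PerpSegments

variable {G : Type*} [Group G] {S : Set G} {H : Subgroup G}

variable (S H) in
structure IsPerpSegment (N : ℕ) (σ : ℕ → G) : Prop where
  start : σ 0 = 1
  wordDist_succ_le : ∀ i < N, wordDist S (σ i) (σ (i + 1)) ≤ 1
  distToSubgroup_eq : ∀ i ≤ N, distToSubgroup S H (σ i) = i

theorem exists_isPerpSegment (hSfin : S.Finite) (hSgen : Subgroup.closure S = ⊤)
    (hind : H.index = 0) (N : ℕ) : ∃ σ : ℕ → G, IsPerpSegment S H N σ := by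
  obtain ⟨x, hNx⟩ := exists_le_distToSubgroup hSfin hSgen hind N
  obtain ⟨p, hp, hxp⟩ := exists_mem_wordDist_eq_distToSubgroup S H x
  obtain ⟨w, hw, hprod, hlen⟩ := exists_word_length_eq_wordLength hSgen (p⁻¹ * x)
  have hD : w.length = distToSubgroup S H x := by
    rw [hlen, ← hxp, wordDist_comm hSgen]
    rfl
  refine ⟨fun i => (w.take i).prod, by simp, fun i _ => ?_, fun i hi => le_antisymm ?_ ?_⟩
  · simpa using wordDist_prod_take_le hw (Nat.le_succ i)
  · calc distToSubgroup S H (w.take i).prod ≤ wordDist S (w.take i).prod 1 :=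
          distToSubgroup_le_wordDist H.one_mem _
      _ = wordDist S (w.take 0).prod (w.take i).prod := by simp [wordDist_comm hSgen _ 1]
      _ ≤ i := by simpa using wordDist_prod_take_le hw (Nat.zero_le i)
  · have hfar := distToSubgroup_le_wordDist_add (H := H) hSgen (p⁻¹ * x) (w.take i).prod
    have hrest : wordDist S (w.take i).prod (p⁻¹ * x) ≤ w.length - i := by
      simpa [hprod] using wordDist_prod_take_le hw (hi.trans (hNx.trans hD.ge))
    rw [distToSubgroup_mul_left (H.inv_mem hp), wordDist_comm hSgen] at hfar
    omega

variable (S H) in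
/-- The vertices of the locally finite tree of perpendicular segments explored by Kőnig's lemma. -/
def IsPerpExtendable (n : ℕ) (g : G) : Prop :=
  ∃ᶠ N in atTop, ∃ σ : ℕ → G, IsPerpSegment S H N σ ∧ σ n = g

theorem isPerpExtendable_zero_one (hSfin : S.Finite) (hSgen : Subgroup.closure S = ⊤)
    (hind : H.index = 0) : IsPerpExtendable S H 0 1 :=
  Frequently.of_forall fun N =>
    (exists_isPerpSegment hSfin hSgen hind N).imp fun _ hσ => ⟨hσ, hσ.start⟩

theorem IsPerpExtendable.distToSubgroup_eq {n : ℕ} {g : G} (h : IsPerpExtendable S H n g) :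
    distToSubgroup S H g = n := by
  obtain ⟨N, hnN, σ, hσ, rfl⟩ := frequently_atTop.mp h n
  exact hσ.distToSubgroup_eq n hnN

theorem IsPerpExtendable.exists_succ (hSfin : S.Finite) (hSgen : Subgroup.closure S = ⊤)
    {n : ℕ} {g : G} (h : IsPerpExtendable S H n g) :
    ∃ g', wordDist S g g' ≤ 1 ∧ IsPerpExtendable S H (n + 1) g' := by
  have hnext : ∃ᶠ N in atTop, ∃ g' ∈ {g' | wordDist S g g' ≤ 1},
      ∃ σ : ℕ → G, IsPerpSegment S H N σ ∧ σ (n + 1) = g' := by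
    refine (h.and_eventually (eventually_ge_atTop (n + 1))).mono ?_
    rintro N ⟨⟨σ, hσ, rfl⟩, hN⟩
    exact ⟨σ (n + 1), hσ.wordDist_succ_le n hN, σ, hσ, rfl⟩
  obtain ⟨g', hg', hfreq⟩ :=
    (frequently_exists_finite (finite_setOf_wordDist_le hSfin hSgen g 1)).mp hnext
  exact ⟨g', hg', hfreq⟩

end PerpSegments

/-- For `H` of infinite index in the finitely generated group `G`, every `h ∈ H` is the
initial point of an `H`-perpendicular geodesic ray in the Cayley graph `Γ(G,S)`:
a geodesic ray `γ` with `γ 0 = h` and `d_S(γ r, H) = r` for all `r > 0`. -/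
theorem exists_perpendicular_geodesic_ray {G : Type*} [Group G] (S : Set G)
    (hSfin : S.Finite) (hSgen : Subgroup.closure S = ⊤)
    (H : Subgroup G) (hind : H.index = 0) (h : G) (hh : h ∈ H) :
    ∃ γ : ℕ → G, γ 0 = h ∧
      (∀ m n : ℕ, wordDist S (γ m) (γ n) = ((m : ℤ) - (n : ℤ)).natAbs) ∧
      (∀ r : ℕ, 0 < r → distToSubgroup S H (γ r) = r) := by
  obtain ⟨γ, hγ0, hγ⟩ := exists_seq_of_exists_succ (isPerpExtendable_zero_one hSfin hSgen hind)
    fun _ _ hg => hg.exists_succ hSfin hSgen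
  have hdist : ∀ n, distToSubgroup S H (γ n) = n := fun n => (hγ n).1.distToSubgroup_eq
  refine ⟨fun n => h * γ n, by simp [hγ0], fun m n => ?_, fun r _ => ?_⟩
  · rw [wordDist_mul_left]
    exact wordDist_eq_natAbs_of_distToSubgroup_eq hSgen (fun n => (hγ n).2) hdist m n
  · rw [distToSubgroup_mul_left hh, hdist]
end

section
/- Suppose G, H, K are infinite finitely generated groups with K ≤ H ≤ G. Then dist^K_H ∘ dist^H_G ≼ dist^K_G. -/
/-- Domination relation: `f ≼ g` iff there are positive constants `A, B, C` with
`f x ≤ g (A*x) + B*x` for all `x > C`. -/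
def Dominates (f g : ℝ → ℝ) : Prop :=
  ∃ A B C : ℝ, 0 < A ∧ 0 < B ∧ 0 < C ∧ ∀ x : ℝ, C < x → f x ≤ g (A * x) + B * x

/-- `f ∼ g` iff `f ≼ g` and `g ≼ f`. -/
def FEquiv (f g : ℝ → ℝ) : Prop := Dominates f g ∧ Dominates g f

/-- The lower distortion of the subset `K` of `G`:
`dist(r) = min { |k|_T : k ∈ K, |k|_S ≥ r }` (with `min ∅ = 0`). -/
noncomputable def lowerDist {G : Type*} [Group G] (S K T : Set G) (r : ℝ) : ℝ :=
  sInf {y : ℝ | ∃ k ∈ K, r ≤ (wordLength S k : ℝ) ∧ y = (wordLength T k : ℝ)}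

/-- The upper distortion of the subset `K` of `G`:
`Dist(r) = max { |k|_T : k ∈ K, |k|_S ≤ r }`. -/
noncomputable def upperDist {G : Type*} [Group G] (S K T : Set G) (r : ℝ) : ℝ :=
  sSup {y : ℝ | ∃ k ∈ K, (wordLength S k : ℝ) ≤ r ∧ y = (wordLength T k : ℝ)}

open Set Pointwise

private lemma setFinitePow {G : Type*} [Group G] {A : Set G} (hA : A.Finite) (n : ℕ) :
    (A ^ n).Finite := by
  induction n with
  | zero => simpa using Set.finite_singleton (1 : G)
  | succ n ih => rw [pow_succ]; exact ih.mul hA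

private lemma listProdMemPow {G : Type*} [Group G] {A : Set G} :
    ∀ (w : List G), (∀ x ∈ w, x ∈ A) → w.prod ∈ A ^ w.length := by
  intro w
  induction w with
  | nil => simp
  | cons a l ih =>
      intro h
      rw [List.prod_cons, List.length_cons, pow_succ']
      exact Set.mul_mem_mul (h a (by simp)) (ih (fun x hx => h x (by simp [hx])))

/-- Every element of a group generated by `S` has a word. -/
private lemma wordSetNonempty {G : Type*} [Group G] {S : Set G} (hgen : Subgroup.closure S = ⊤)
    (g : G) :
    {n | ∃ w : List G, (∀ x ∈ w, x ∈ S ∨ x⁻¹ ∈ S) ∧ w.prod = g ∧ w.length = n}.Nonempty := by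
  have hg : g ∈ Subgroup.closure S := hgen ▸ Subgroup.mem_top g
  have hg' : g ∈ (Subgroup.closure S).toSubmonoid := hg
  rw [Subgroup.closure_toSubmonoid] at hg'
  obtain ⟨l, hl, hprod⟩ := Submonoid.exists_list_of_mem_closure hg'
  refine ⟨l.length, l, fun x hx => ?_, hprod, rfl⟩
  rcases hl x hx with h | h
  · exact Or.inl h
  · exact Or.inr (Set.mem_inv.mp h)

/-- Balls with respect to a finite generating set are finite. -/
private lemma ballFinite {G : Type*} [Group G] {S : Set G} (hfin : S.Finite)
    (hgen : Subgroup.closure S = ⊤) (n : ℕ) :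
    {g : G | wordLength S g ≤ n}.Finite := by
  set A : Set G := (S ∪ S⁻¹) ∪ {1} with hA
  have h1A : (1 : G) ∈ A := by simp [hA]
  have hAfin : A.Finite := (hfin.union hfin.inv).union (Set.finite_singleton 1)
  refine ((setFinitePow hAfin n).subset ?_)
  intro g hg
  obtain ⟨w, hw, hprod, hlen⟩ := Nat.sInf_mem (wordSetNonempty hgen g)
  have hwA : ∀ x ∈ w, x ∈ A := by
    intro x hx
    rcases hw x hx with h | h
    · exact Or.inl (Or.inl h)
    · exact Or.inl (Or.inr (Set.mem_inv.mpr h))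
  have : g ∈ A ^ w.length := hprod ▸ listProdMemPow w hwA
  exact Set.pow_subset_pow_right h1A (hlen ▸ hg) this

private lemma lowerDistBddBelow {G : Type*} [Group G] (S K T : Set G) (r : ℝ) :
    BddBelow {y : ℝ | ∃ k ∈ K, r ≤ (wordLength S k : ℝ) ∧ y = (wordLength T k : ℝ)} := by
  refine ⟨0, fun y hy => ?_⟩
  obtain ⟨k, -, -, rfl⟩ := hy
  positivity

/-- For infinite finitely generated groups `K ≤ H ≤ G`:
`dist^K_H ∘ dist^H_G ≼ dist^K_G`. -/
theorem lowerDist_comp_dominated {G : Type*} [Group G] (H K : Subgroup G) (hKH : K ≤ H)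
    (SG SH SK : Set G)
    (hSGfin : SG.Finite) (hSGgen : Subgroup.closure SG = ⊤)
    (hSHfin : SH.Finite) (hSHsub : SH ⊆ (H : Set G)) (hSHgen : Subgroup.closure SH = H)
    (hSKfin : SK.Finite) (hSKsub : SK ⊆ (K : Set G)) (hSKgen : Subgroup.closure SK = K)
    (hGinf : Infinite G) (hHinf : (H : Set G).Infinite) (hKinf : (K : Set G).Infinite) :
    Dominates (fun r => lowerDist SH (K : Set G) SK (lowerDist SG (H : Set G) SH r))
      (lowerDist SG (K : Set G) SK) := by
  refine ⟨1, 1, 1, one_pos, one_pos, one_pos, fun x hx => ?_⟩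
  have hx0 : (0 : ℝ) < x := lt_trans one_pos hx
  -- The set defining `lowerDist SG K SK x` is nonempty:
  have hne : {y : ℝ | ∃ k ∈ (K : Set G), x ≤ (wordLength SG k : ℝ) ∧
      y = (wordLength SK k : ℝ)}.Nonempty := by
    obtain ⟨k, hkK, hkball⟩ :
        ∃ k, k ∈ (K : Set G) ∧ k ∉ {g : G | wordLength SG g ≤ ⌈x⌉₊} := by
      have := (hKinf.diff (ballFinite hSGfin hSGgen ⌈x⌉₊)).nonempty
      obtain ⟨k, hk⟩ := this
      exact ⟨k, hk.1, hk.2⟩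
    refine ⟨(wordLength SK k : ℝ), k, hkK, ?_, rfl⟩
    have : ⌈x⌉₊ < wordLength SG k := lt_of_not_ge hkball
    calc x ≤ (⌈x⌉₊ : ℝ) := Nat.le_ceil x
      _ ≤ (wordLength SG k : ℝ) := by exact_mod_cast this.le
  -- Main pointwise bound
  have key : lowerDist SH (K : Set G) SK (lowerDist SG (H : Set G) SH x)
      ≤ lowerDist SG (K : Set G) SK x := by
    refine le_csInf hne ?_
    rintro y ⟨k, hkK, hkx, rfl⟩
    -- `k ∈ H` and `lowerDist SG H SH x ≤ |k|_SH`
    have hkH : k ∈ (H : Set G) := hKH hkK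
    have h1 : lowerDist SG (H : Set G) SH x ≤ (wordLength SH k : ℝ) :=
      csInf_le (lowerDistBddBelow _ _ _ _) ⟨k, hkH, hkx, rfl⟩
    exact csInf_le (lowerDistBddBelow _ _ _ _) ⟨k, hkK, h1, rfl⟩
  calc lowerDist SH (K : Set G) SK (lowerDist SG (H : Set G) SH x)
      ≤ lowerDist SG (K : Set G) SK x := key
    _ = lowerDist SG (K : Set G) SK (1 * x) := by rw [one_mul]
    _ ≤ lowerDist SG (K : Set G) SK (1 * x) + 1 * x := by nlinarith
end

section
/- Let G = ⟨a,b,c | bab⁻¹a⁻¹ = c, ac = ca, bc = cb⟩ be the Heisenberg group and H the cyclic subgroup generated by c. Then the lower distortion dist^H_G and the upper distortion Dist^H_G are both equivalent to a quadratic function. -/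
/-- The discrete Heisenberg group in normal-form coordinates: the element
`⟨k, l, p⟩` represents `a^k b^l c^p`.  (Equivalently, upper triangular `3×3`
integer matrices with `1`s on the diagonal.) -/
@[ext] structure Heis where
  k : ℤ
  l : ℤ
  p : ℤ

namespace Heis

instance : Mul Heis := ⟨fun x y => ⟨x.k + y.k, x.l + y.l, x.p + y.p + x.l * y.k⟩⟩
instance : One Heis := ⟨⟨0, 0, 0⟩⟩
instance : Inv Heis := ⟨fun x => ⟨-x.k, -x.l, -x.p + x.l * x.k⟩⟩

lemma mul_def (x y : Heis) : x * y = ⟨x.k + y.k, x.l + y.l, x.p + y.p + x.l * y.k⟩ := rfl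
lemma one_def : (1 : Heis) = ⟨0, 0, 0⟩ := rfl
lemma inv_def (x : Heis) : x⁻¹ = ⟨-x.k, -x.l, -x.p + x.l * x.k⟩ := rfl

instance : Group Heis where
  mul_assoc x y z := by ext <;> simp [mul_def] <;> ring
  one_mul x := by ext <;> simp [mul_def, one_def]
  mul_one x := by ext <;> simp [mul_def, one_def]
  inv_mul_cancel x := by ext <;> simp [mul_def, inv_def, one_def]

/-- The generator `a`. -/
def a : Heis := ⟨1, 0, 0⟩
/-- The generator `b`. -/
def b : Heis := ⟨0, 1, 0⟩
/-- The generator `c`. -/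
def c : Heis := ⟨0, 0, 1⟩

end Heis


open Heis

/-- The generating set `S = {a,b,c}` of the Heisenberg group. -/
def heisGens : Set Heis := {a, b, c}

/-! A word of length `n` in `a, b, c` has `a`-coordinate at most `n` in absolute value, and
prepending a letter changes the central coordinate by at most one plus the `a`-coordinate, so
`|c ^ p|_S ^ 2 ≥ |p|`. Conversely `c ^ p = ⁅b ^ n, a ^ (±n)⁆ * c ^ r` with `n = ⌊√|p|⌋` and
`|r| ≤ 2n`, a word of length at most `6n`, so `|c ^ p|_S ^ 2 ≤ 36 |p|`. As `|c ^ p|_c = |p|`,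
both distortion functions are squeezed between quadratics; the elements `c ^ (n ^ 2)` witness
the bounds that need an element of prescribed length. -/

section WordLength

variable {G : Type*} [Group G] {S : Set G}

def IsWord (S : Set G) (w : List G) : Prop := ∀ x ∈ w, x ∈ S ∨ x⁻¹ ∈ S

theorem isWord_cons {x : G} {w : List G} :
    IsWord S (x :: w) ↔ (x ∈ S ∨ x⁻¹ ∈ S) ∧ IsWord S w :=
  List.forall_mem_cons

theorem IsWord.append {v w : List G} (hv : IsWord S v) (hw : IsWord S w) : IsWord S (v ++ w) := by
  intro x hx
  rcases List.mem_append.1 hx with hx | hx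
  exacts [hv x hx, hw x hx]

theorem wordLength_prod_le {w : List G} (hw : IsWord S w) : wordLength S w.prod ≤ w.length :=
  Nat.sInf_le ⟨w, hw, rfl, rfl⟩

theorem exists_isWord_length_eq_wordLength {w : List G} (hw : IsWord S w) :
    ∃ v, IsWord S v ∧ v.prod = w.prod ∧ v.length = wordLength S w.prod :=
  Nat.sInf_mem (s := {n | ∃ v : List G, IsWord S v ∧ v.prod = w.prod ∧ v.length = n})
    ⟨_, w, hw, rfl, rfl⟩

def zpowWord (g : G) (z : ℤ) : List G :=
  List.replicate z.natAbs (if 0 ≤ z then g else g⁻¹)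

@[simp]
theorem length_zpowWord (g : G) (z : ℤ) : (zpowWord g z).length = z.natAbs :=
  List.length_replicate

@[simp]
theorem prod_zpowWord (g : G) (z : ℤ) : (zpowWord g z).prod = g ^ z := by
  rcases le_or_gt 0 z with hz | hz
  · rw [zpowWord, if_pos hz, List.prod_replicate, ← zpow_natCast, Int.natAbs_of_nonneg hz]
  · rw [zpowWord, if_neg hz.not_ge, List.prod_replicate, inv_pow, ← zpow_natCast, ← zpow_neg,
      Int.ofNat_natAbs_of_nonpos hz.le, neg_neg]

theorem isWord_zpowWord {g : G} (hg : g ∈ S) (z : ℤ) : IsWord S (zpowWord g z) := by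
  intro x hx
  obtain rfl := List.eq_of_mem_replicate hx
  split_ifs
  · exact Or.inl hg
  · exact Or.inr (by rwa [inv_inv])

theorem wordLength_zpow_le {g : G} (hg : g ∈ S) (z : ℤ) : wordLength S (g ^ z) ≤ z.natAbs := by
  simpa using wordLength_prod_le (isWord_zpowWord hg z)

theorem IsWord.exists_prod_eq_zpow {g : G} {w : List G} (hw : IsWord {g} w) :
    ∃ z : ℤ, w.prod = g ^ z ∧ z.natAbs ≤ w.length := by
  induction w with
  | nil => exact ⟨0, by simp⟩
  | cons x w ih =>
    obtain ⟨hx | hx, hw⟩ := isWord_cons.1 hw <;> obtain ⟨z, hz, hzw⟩ := ih hw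
    · rw [Set.mem_singleton_iff] at hx
      exact ⟨1 + z, by rw [List.prod_cons, hz, zpow_add, zpow_one, hx], by simp; omega⟩
    · rw [Set.mem_singleton_iff, inv_eq_iff_eq_inv] at hx
      exact ⟨-1 + z, by rw [List.prod_cons, hz, zpow_add, zpow_neg_one, hx], by simp; omega⟩

theorem wordLength_singleton_zpow {g : G} (hg : Function.Injective (fun z : ℤ => g ^ z)) (z : ℤ) :
    wordLength {g} (g ^ z) = z.natAbs := by
  refine (wordLength_zpow_le (Set.mem_singleton g) z).antisymm ?_
  have hw := isWord_zpowWord (Set.mem_singleton g) z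
  obtain ⟨v, hv, hvprod, hvlen⟩ := exists_isWord_length_eq_wordLength hw
  obtain ⟨y, hy, hyv⟩ := hv.exists_prod_eq_zpow
  rw [prod_zpowWord] at hvprod hvlen
  obtain rfl : y = z := hg (hy.symm.trans hvprod)
  omega

end WordLength

section Distortion

variable {G : Type*} [Group G] {S K T : Set G} {r y : ℝ} {k : G}

theorem lowerDist_le (hk : k ∈ K) (hr : r ≤ wordLength S k) :
    lowerDist S K T r ≤ wordLength T k :=
  csInf_le ⟨0, by rintro _ ⟨k, -, -, rfl⟩; positivity⟩ ⟨k, hk, hr, rfl⟩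

theorem le_lowerDist (hk : k ∈ K) (hr : r ≤ wordLength S k)
    (hy : ∀ k ∈ K, r ≤ wordLength S k → y ≤ wordLength T k) : y ≤ lowerDist S K T r :=
  le_csInf ⟨_, k, hk, hr, rfl⟩ <| by rintro _ ⟨k, hk, hr, rfl⟩; exact hy k hk hr

theorem upperDist_le (hy₀ : 0 ≤ y) (hy : ∀ k ∈ K, wordLength S k ≤ r → wordLength T k ≤ y) :
    upperDist S K T r ≤ y :=
  Real.sSup_le (by rintro _ ⟨k, hk, hr, rfl⟩; exact hy k hk hr) hy₀

theorem le_upperDist (hy : ∀ k ∈ K, wordLength S k ≤ r → wordLength T k ≤ y) (hk : k ∈ K)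
    (hr : wordLength S k ≤ r) : wordLength T k ≤ upperDist S K T r :=
  le_csSup ⟨y, by rintro _ ⟨k, hk, hr, rfl⟩; exact hy k hk hr⟩ ⟨k, hk, hr, rfl⟩

end Distortion

section QuadraticDistortion

variable {G : Type*} [Group G] {S K T : Set G}

theorem exists_mem_wordLength_eq_sq (hTS : ∀ k ∈ K, wordLength T k ≤ wordLength S k ^ 2)
    (hsq : ∀ n : ℕ, ∃ k ∈ K, wordLength T k = n ^ 2) (n : ℕ) :
    ∃ k ∈ K, wordLength T k = n ^ 2 ∧ n ≤ wordLength S k := by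
  obtain ⟨k, hk, hkT⟩ := hsq n
  exact ⟨k, hk, hkT, (Nat.pow_le_pow_iff_left two_ne_zero).1 (hkT ▸ hTS k hk)⟩

theorem wordLength_le_sq_of_le (hTS : ∀ k ∈ K, wordLength T k ≤ wordLength S k ^ 2) {k : G}
    (hk : k ∈ K) {r : ℝ} (hr : wordLength S k ≤ r) : (wordLength T k : ℝ) ≤ r ^ 2 :=
  calc (wordLength T k : ℝ) ≤ (wordLength S k : ℝ) ^ 2 := by exact_mod_cast hTS k hk
    _ ≤ r ^ 2 := pow_le_pow_left₀ (Nat.cast_nonneg _) hr 2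

theorem dominates_lowerDist_sq (hTS : ∀ k ∈ K, wordLength T k ≤ wordLength S k ^ 2)
    (hsq : ∀ n : ℕ, ∃ k ∈ K, wordLength T k = n ^ 2) :
    Dominates (lowerDist S K T) (fun x => x ^ 2) := by
  refine ⟨1, 3, 1, one_pos, three_pos, one_pos, fun x hx => ?_⟩
  obtain ⟨k, hk, hkT, hkS⟩ := exists_mem_wordLength_eq_sq hTS hsq ⌈x⌉₊
  have hceil := Nat.ceil_lt_add_one (zero_le_one.trans hx.le)
  calc lowerDist S K T x ≤ wordLength T k :=
        lowerDist_le hk ((Nat.le_ceil x).trans (by exact_mod_cast hkS))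
    _ = (⌈x⌉₊ : ℝ) ^ 2 := by exact_mod_cast hkT
    _ ≤ (1 * x) ^ 2 + 3 * x := by nlinarith [Nat.le_ceil x]

theorem dominates_sq_lowerDist {C : ℕ} (hTS : ∀ k ∈ K, wordLength T k ≤ wordLength S k ^ 2)
    (hST : ∀ k ∈ K, wordLength S k ^ 2 ≤ C * wordLength T k)
    (hsq : ∀ n : ℕ, ∃ k ∈ K, wordLength T k = n ^ 2) :
    Dominates (fun x => x ^ 2) (lowerDist S K T) := by
  refine ⟨C + 1, 1, 1, by positivity, one_pos, one_pos, fun x hx => ?_⟩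
  obtain ⟨k, hk, -, hkS⟩ := exists_mem_wordLength_eq_sq hTS hsq ⌈(C + 1) * x⌉₊
  suffices x ^ 2 ≤ lowerDist S K T ((C + 1) * x) by linarith
  refine le_lowerDist hk ((Nat.le_ceil _).trans (by exact_mod_cast hkS)) fun k hk hkS => ?_
  have hST' : (wordLength S k : ℝ) ^ 2 ≤ C * wordLength T k := by exact_mod_cast hST k hk
  have hT₀ : (0 : ℝ) ≤ wordLength T k := Nat.cast_nonneg _
  have hC : (0 : ℝ) < (C + 1) ^ 2 := by positivity
  refine le_of_mul_le_mul_left ?_ hC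
  calc ((C : ℝ) + 1) ^ 2 * x ^ 2 = ((C + 1) * x) ^ 2 := by ring
    _ ≤ (wordLength S k : ℝ) ^ 2 := pow_le_pow_left₀ (by positivity) hkS 2
    _ ≤ C * wordLength T k := hST'
    _ ≤ (C + 1) ^ 2 * wordLength T k := by nlinarith

theorem dominates_upperDist_sq (hTS : ∀ k ∈ K, wordLength T k ≤ wordLength S k ^ 2) :
    Dominates (upperDist S K T) (fun x => x ^ 2) := by
  refine ⟨1, 1, 1, one_pos, one_pos, one_pos, fun x hx => ?_⟩
  have := upperDist_le (sq_nonneg x) fun k hk hkS => wordLength_le_sq_of_le hTS hk hkS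
  linarith

theorem dominates_sq_upperDist {C : ℕ} (hTS : ∀ k ∈ K, wordLength T k ≤ wordLength S k ^ 2)
    (hST : ∀ k ∈ K, wordLength S k ^ 2 ≤ C * wordLength T k)
    (hsq : ∀ n : ℕ, ∃ k ∈ K, wordLength T k = n ^ 2) :
    Dominates (fun x => x ^ 2) (upperDist S K T) := by
  refine ⟨2 * (C + 1), 1, 1, by positivity, one_pos, one_pos, fun x hx => ?_⟩
  obtain ⟨k, hk, hkT, -⟩ := exists_mem_wordLength_eq_sq hTS hsq ⌈x⌉₊
  have hceil := Nat.ceil_lt_add_one (zero_le_one.trans hx.le)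
  have hkT' : (wordLength T k : ℝ) = (⌈x⌉₊ : ℝ) ^ 2 := by exact_mod_cast hkT
  have hkS : (wordLength S k : ℝ) ≤ 2 * (C + 1) * x := by
    have hST' : (wordLength S k : ℝ) ^ 2 ≤ C * wordLength T k := by exact_mod_cast hST k hk
    refine le_of_sq_le_sq ?_ (by positivity)
    calc (wordLength S k : ℝ) ^ 2 ≤ C * (⌈x⌉₊ : ℝ) ^ 2 := hkT' ▸ hST'
      _ ≤ C * (2 * x) ^ 2 := by gcongr; linarith
      _ ≤ (2 * (C + 1) * x) ^ 2 := by nlinarith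
  calc x ^ 2 ≤ (⌈x⌉₊ : ℝ) ^ 2 := pow_le_pow_left₀ (by linarith) (Nat.le_ceil x) 2
    _ = wordLength T k := hkT'.symm
    _ ≤ upperDist S K T (2 * (C + 1) * x) :=
        le_upperDist (fun k hk hkS => wordLength_le_sq_of_le hTS hk hkS) hk hkS
    _ ≤ upperDist S K T (2 * (C + 1) * x) + 1 * x := by linarith

end QuadraticDistortion

open scoped commutatorElement

namespace Heis

@[simp]
theorem a_zpow (n : ℤ) : a ^ n = ⟨n, 0, 0⟩ := by
  induction n using Int.induction_on with
  | zero => rfl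
  | succ m ih => rw [zpow_add_one, ih]; ext <;> simp [mul_def, a]
  | pred m ih => rw [zpow_sub_one, ih]; ext <;> simp [mul_def, inv_def, a]; ring

@[simp]
theorem b_zpow (n : ℤ) : b ^ n = ⟨0, n, 0⟩ := by
  induction n using Int.induction_on with
  | zero => rfl
  | succ m ih => rw [zpow_add_one, ih]; ext <;> simp [mul_def, b]
  | pred m ih => rw [zpow_sub_one, ih]; ext <;> simp [mul_def, inv_def, b]; ring

@[simp]
theorem c_zpow (n : ℤ) : c ^ n = ⟨0, 0, n⟩ := by
  induction n using Int.induction_on with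
  | zero => rfl
  | succ m ih => rw [zpow_add_one, ih]; ext <;> simp [mul_def, c]
  | pred m ih => rw [zpow_sub_one, ih]; ext <;> simp [mul_def, inv_def, c]; ring

theorem c_zpow_injective : Function.Injective (fun n : ℤ => c ^ n) := fun m n h => by
  simpa using congrArg Heis.p h

theorem commutatorElement_b_zpow_a_zpow (n m : ℤ) : ⁅b ^ n, a ^ m⁆ = c ^ (n * m) := by
  ext <;> simp [commutatorElement_def, mul_def, inv_def]

theorem abs_le_one_of_mem {x : Heis} (hx : x ∈ heisGens ∨ x⁻¹ ∈ heisGens) :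
    |x.k| ≤ 1 ∧ |x.l| ≤ 1 ∧ |x.p| ≤ 1 := by
  simp only [heisGens, Set.mem_insert_iff, Set.mem_singleton_iff, inv_eq_iff_eq_inv] at hx
  rcases hx with (rfl | rfl | rfl) | (rfl | rfl | rfl) <;> simp [a, b, c, inv_def]

theorem abs_prod_k_le {w : List Heis} (hw : IsWord heisGens w) : |w.prod.k| ≤ w.length := by
  induction w with
  | nil => simp [one_def]
  | cons x w ih =>
    obtain ⟨hx, hw⟩ := isWord_cons.1 hw
    have hxk := (abs_le_one_of_mem hx).1
    calc |(x * w.prod).k| ≤ |x.k| + |w.prod.k| := abs_add_le _ _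
      _ ≤ (x :: w).length := by push_cast [List.length_cons]; linarith [ih hw]

theorem abs_prod_p_le {w : List Heis} (hw : IsWord heisGens w) :
    |w.prod.p| ≤ (w.length : ℤ) ^ 2 := by
  induction w with
  | nil => simp [one_def]
  | cons x w ih =>
    obtain ⟨hx, hw⟩ := isWord_cons.1 hw
    obtain ⟨-, hxl, hxp⟩ := abs_le_one_of_mem hx
    have hxlk : |x.l * w.prod.k| ≤ w.length := by
      rw [abs_mul]; nlinarith [abs_prod_k_le hw, abs_nonneg w.prod.k]
    calc |(x * w.prod).p| ≤ |x.p| + |w.prod.p| + |x.l * w.prod.k| := abs_add_three _ _ _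
      _ ≤ ((x :: w).length : ℤ) ^ 2 := by push_cast [List.length_cons]; nlinarith [ih hw]

theorem a_mem_heisGens : a ∈ heisGens := Or.inl rfl

theorem b_mem_heisGens : b ∈ heisGens := Or.inr (Or.inl rfl)

theorem c_mem_heisGens : c ∈ heisGens := Or.inr (Or.inr rfl)

theorem natAbs_le_wordLength_c_zpow_sq (p : ℤ) : p.natAbs ≤ wordLength heisGens (c ^ p) ^ 2 := by
  obtain ⟨v, hv, hvprod, hvlen⟩ :=
    exists_isWord_length_eq_wordLength (isWord_zpowWord c_mem_heisGens p)
  rw [prod_zpowWord] at hvprod hvlen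
  have hp := abs_prod_p_le hv
  rw [hvprod, c_zpow, hvlen] at hp
  exact_mod_cast Int.abs_eq_natAbs p ▸ hp

theorem wordLength_c_zpow_mul_add_le (n m r : ℤ) :
    wordLength heisGens (c ^ (n * m + r)) ≤ 2 * n.natAbs + 2 * m.natAbs + r.natAbs := by
  let w := zpowWord b n ++ zpowWord a m ++ zpowWord b (-n) ++ zpowWord a (-m) ++ zpowWord c r
  have hw : IsWord heisGens w :=
    (isWord_zpowWord b_mem_heisGens n).append (isWord_zpowWord a_mem_heisGens m)
      |>.append (isWord_zpowWord b_mem_heisGens (-n)) |>.append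
      (isWord_zpowWord a_mem_heisGens (-m)) |>.append (isWord_zpowWord c_mem_heisGens r)
  have hprod : w.prod = ⁅b ^ n, a ^ m⁆ * c ^ r := by
    simp only [w, List.prod_append, prod_zpowWord, commutatorElement_def, zpow_neg]
  calc wordLength heisGens (c ^ (n * m + r)) ≤ w.length := by
        rw [zpow_add, ← commutatorElement_b_zpow_a_zpow, ← hprod]
        exact wordLength_prod_le hw
    _ = 2 * n.natAbs + 2 * m.natAbs + r.natAbs := by
        simp only [w, List.length_append, length_zpowWord, Int.natAbs_neg]
        ring

theorem wordLength_c_zpow_le (p : ℤ) : wordLength heisGens (c ^ p) ≤ 6 * Nat.sqrt p.natAbs := by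
  set n := Nat.sqrt p.natAbs
  have hlow : (n : ℤ) * n ≤ |p| := by
    rw [Int.abs_eq_natAbs]; exact_mod_cast Nat.sqrt_le p.natAbs
  have hhigh : |p| < (n + 1) * (n + 1) := by
    rw [Int.abs_eq_natAbs]; exact_mod_cast Nat.lt_succ_sqrt p.natAbs
  rcases le_or_gt 0 p with hp | hp
  · have h := wordLength_c_zpow_mul_add_le n n (p - n * n)
    rw [abs_of_nonneg hp] at hlow hhigh
    rw [show (n : ℤ) * n + (p - n * n) = p by ring] at h
    zify at h ⊢
    rw [Nat.abs_cast, abs_of_nonneg (by linarith : 0 ≤ p - n * n)] at h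
    linarith
  · have h := wordLength_c_zpow_mul_add_le n (-n) (p + n * n)
    rw [abs_of_neg hp] at hlow hhigh
    rw [show (n : ℤ) * -n + (p + n * n) = p by ring] at h
    zify at h ⊢
    rw [abs_neg, Nat.abs_cast, abs_of_nonpos (by linarith : p + n * n ≤ 0)] at h
    linarith

theorem wordLength_c_zpow_sq_le (p : ℤ) : wordLength heisGens (c ^ p) ^ 2 ≤ 36 * p.natAbs :=
  calc wordLength heisGens (c ^ p) ^ 2 ≤ (6 * Nat.sqrt p.natAbs) ^ 2 :=
        Nat.pow_le_pow_left (wordLength_c_zpow_le p) 2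
    _ ≤ 36 * p.natAbs := by rw [mul_pow]; exact Nat.mul_le_mul_left 36 (Nat.sqrt_le' _)

end Heis

/-- For the Heisenberg group `G` with `H = ⟨c⟩`, both the lower distortion
`dist^H_G` and the upper distortion `Dist^H_G` are quadratic. -/
theorem heisenberg_distortions_quadratic :
    FEquiv (lowerDist heisGens ((Subgroup.zpowers c : Subgroup Heis) : Set Heis) {c})
      (fun x => x ^ 2) ∧
    FEquiv (upperDist heisGens ((Subgroup.zpowers c : Subgroup Heis) : Set Heis) {c})
      (fun x => x ^ 2) := by
  have hT (p : ℤ) : wordLength {c} (c ^ p) = p.natAbs :=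
    wordLength_singleton_zpow c_zpow_injective p
  have hTS : ∀ k ∈ (Subgroup.zpowers c : Set Heis),
      wordLength {c} k ≤ wordLength heisGens k ^ 2 :=
    Subgroup.forall_mem_zpowers.2 fun p => hT p ▸ natAbs_le_wordLength_c_zpow_sq p
  have hST : ∀ k ∈ (Subgroup.zpowers c : Set Heis),
      wordLength heisGens k ^ 2 ≤ 36 * wordLength {c} k :=
    Subgroup.forall_mem_zpowers.2 fun p => hT p ▸ wordLength_c_zpow_sq_le p
  have hsq (n : ℕ) : ∃ k ∈ (Subgroup.zpowers c : Set Heis), wordLength {c} k = n ^ 2 :=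
    ⟨c ^ ((n : ℤ) ^ 2), Subgroup.zpow_mem_zpowers c _, by rw [hT]; simp⟩
  exact ⟨⟨dominates_lowerDist_sq hTS hsq, dominates_sq_lowerDist hTS hST hsq⟩,
    ⟨dominates_upperDist_sq hTS, dominates_sq_upperDist hTS hST hsq⟩⟩
end
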